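/- arXiv:1711.00923 — 3 statements merged into one kernel-verified Lean document; each statement's English description precedes it below -/
import Mathlib

section
/- For α > 0 and λ ∈ ℝ \ {0}, the ψ-Riemann–Liouville fractional integral of order α of t ↦ E_α(λ(ψ(t) − ψ(a))^α) equals (1/λ)(E_α(λ(ψ(t) − ψ(a))^α) − 1) for all t ∈ [a,b], where E_α is the Mittag-Leffler function. -/
open Real Set

/-- ψ-Riemann–Liouville fractional integral of order α with base point a. -/
noncomputable def psiInt (ψ : ℝ → ℝ) (a α : ℝ) (x : ℝ → ℝ) (t : ℝ) : ℝ :=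
  (1 / Real.Gamma α) * ∫ τ in a..t, deriv ψ τ * (ψ t - ψ τ) ^ (α - 1) * x τ

/-- the operator x ↦ (1/ψ') x'. -/
noncomputable def psiD (ψ : ℝ → ℝ) : (ℝ → ℝ) → ℝ → ℝ :=
  fun x t => (deriv ψ t)⁻¹ * deriv x t

/-- ψ-Caputo fractional derivative of order α ∈ (2,3) (n = 3):
Riemann–Liouville type derivative of x minus its second order ψ-Taylor polynomial at a. -/
noncomputable def caputo (ψ : ℝ → ℝ) (a α : ℝ) (x : ℝ → ℝ) : ℝ → ℝ :=
  (psiD ψ)^[3] (psiInt ψ a (3 - α) (fun s =>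
    x s - x a - psiD ψ x a * (ψ s - ψ a) - psiD ψ (psiD ψ x) a / 2 * (ψ s - ψ a) ^ 2))

/-- ψ-Caputo fractional derivative of order α ∈ (2,3) for C³ functions
(integral representation). -/
noncomputable def caputoC3 (ψ : ℝ → ℝ) (a α : ℝ) (x : ℝ → ℝ) : ℝ → ℝ :=
  psiInt ψ a (3 - α) ((psiD ψ)^[3] x)

/-- Mittag-Leffler function. -/
noncomputable def ML (α z : ℝ) : ℝ := ∑' k : ℕ, z ^ k / Real.Gamma (k * α + 1)

/-- the constant γ_x of the Volterra equation. -/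
noncomputable def gammaX (ψ : ℝ → ℝ) (a b v α K xa xa1 N : ℝ) (f : ℝ → ℝ → ℝ)
    (x : ℝ → ℝ) : ℝ :=
  (psiInt ψ a α (fun s => f s (x s)) b - K * psiInt ψ a (2 * α) (fun s => f s (x s)) v
    + xa * (1 - K / Real.Gamma (1 + α) * (ψ v - ψ a) ^ α)
    + xa1 / deriv ψ a * (ψ b - ψ a - K / Real.Gamma (2 + α) * (ψ v - ψ a) ^ (1 + α))) / N

/-- the operator F associated to the Volterra equation. -/
noncomputable def Fop (ψ : ℝ → ℝ) (a b v α K xa xa1 N : ℝ) (f : ℝ → ℝ → ℝ)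
    (x : ℝ → ℝ) (t : ℝ) : ℝ :=
  psiInt ψ a α (fun s => f s (x s)) t + xa + xa1 / deriv ψ a * (ψ t - ψ a)
    + gammaX ψ a b v α K xa xa1 N f x * (ψ t - ψ a) ^ 2

/-!
Expanding `E_α` termwise, the substitution `v = ψ τ - ψ a` turns the fractional integral of
`(ψ - ψ a) ^ (k α)` into a Beta integral, equal to
`Γ(k α + 1) / Γ((k + 1) α + 1) · (ψ t - ψ a) ^ ((k + 1) α)`.
So `I^α` shifts the Mittag-Leffler series by one index, which gives
`λ⁻¹ (E_α(λ (ψ t - ψ a)^α) - 1)`.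
Termwise integration is legitimate because the same series with `|λ|` converges: by
log-convexity, `Γ(x + α) ≥ Γ(x) (x - 1)^α`, so the ratio of consecutive terms tends to `0`.
-/

open MeasureTheory Filter

namespace Real

theorem Gamma_mul_rpow_le_Gamma_add {x α : ℝ} (hx : 1 < x) (hα : 0 < α) :
    Gamma x * (x - 1) ^ α ≤ Gamma (x + α) := by
  have hx1 : 0 < x - 1 := sub_pos.2 hx
  have hΓ : 0 < Gamma (x - 1) := Gamma_pos_of_pos hx1
  -- convexity of `log ∘ Gamma`, with slope `log (x - 1)` on `[x - 1, x]`
  have hslope := convexOn_log_Gamma.slope_mono_adjacent (x := x - 1) (y := x) (z := x + α)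
    (mem_Ioi.2 hx1) (mem_Ioi.2 (by linarith)) (by linarith) (by linarith)
  have hrec : Gamma x = (x - 1) * Gamma (x - 1) := by simpa using Gamma_add_one hx1.ne'
  have hstep : log (Gamma x) - log (Gamma (x - 1)) = log (x - 1) := by
    rw [hrec, log_mul hx1.ne' hΓ.ne']; ring
  simp only [Function.comp_apply, hstep, sub_sub_cancel, div_one, add_sub_cancel_left] at hslope
  rw [le_div_iff₀ hα] at hslope
  rw [← log_le_log_iff (by positivity) (Gamma_pos_of_pos (by linarith)),
    log_mul (by positivity) (by positivity), log_rpow hx1]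
  linarith

theorem integral_rpow_mul_sub_rpow {p q X : ℝ} (hp : 0 < p) (hq : 0 < q) (hX : 0 < X) :
    ∫ u in (0 : ℝ)..X, u ^ (p - 1) * (X - u) ^ (q - 1)
      = X ^ (p + q - 1) * (Gamma p * Gamma q / Gamma (p + q)) := by
  apply Complex.ofReal_injective
  have hbeta := Complex.betaIntegral_scaled p q hX
  rw [Complex.betaIntegral_eq_Gamma_mul_div _ _ (by simpa using hp) (by simpa using hq)]
    at hbeta
  have hcongr : EqOn (fun u : ℝ => ((u ^ (p - 1) * (X - u) ^ (q - 1) : ℝ) : ℂ))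
      (fun u : ℝ => (u : ℂ) ^ ((p : ℂ) - 1) * ((X : ℂ) - u) ^ ((q : ℂ) - 1)) (uIcc 0 X) := by
    intro u hu
    rw [uIcc_of_le hX.le] at hu
    simp only [Complex.ofReal_mul, Complex.ofReal_cpow hu.1,
      Complex.ofReal_cpow (sub_nonneg.2 hu.2)]
    push_cast
    rfl
  rw [← intervalIntegral.integral_ofReal, intervalIntegral.integral_congr hcongr, hbeta]
  push_cast [Complex.ofReal_cpow hX.le, ← Complex.Gamma_ofReal]
  rfl

end Real

theorem summable_mittagLeffler {α : ℝ} (hα : 0 < α) (z : ℝ) :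
    Summable fun k : ℕ => z ^ k / Gamma (k * α + 1) := by
  refine summable_of_ratio_norm_eventually_le (r := 1 / 2) (by norm_num) ?_
  have hlarge : ∀ᶠ k : ℕ in atTop, 2 * |z| ≤ ((k : ℝ) * α) ^ α :=
    ((tendsto_rpow_atTop hα).comp
      (tendsto_natCast_atTop_atTop.atTop_mul_const hα)).eventually_ge_atTop _
  filter_upwards [hlarge, eventually_ge_atTop 1] with k hk hk1
  have hkα : 0 < (k : ℝ) * α := mul_pos (by exact_mod_cast hk1) hα
  have hG : 0 < Gamma (k * α + 1) := Gamma_pos_of_pos (by linarith)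
  have hG' : 0 < Gamma (k * α + 1 + α) := Gamma_pos_of_pos (by linarith)
  have hgrowth : 2 * |z| * Gamma (k * α + 1) ≤ Gamma (k * α + 1 + α) := by
    have := Gamma_mul_rpow_le_Gamma_add (x := k * α + 1) (by linarith) hα
    rw [add_sub_cancel_right] at this
    nlinarith
  have hcast : ((k + 1 : ℕ) : ℝ) * α + 1 = k * α + 1 + α := by push_cast; ring
  rw [hcast, norm_div, norm_div, norm_pow, norm_pow, Real.norm_of_nonneg hG.le,
    Real.norm_of_nonneg hG'.le, div_le_iff₀ hG', pow_succ, Real.norm_eq_abs]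
  calc |z| ^ k * |z|
      = 1 / 2 * (|z| ^ k / Gamma (k * α + 1)) * (2 * |z| * Gamma (k * α + 1)) := by field_simp
    _ ≤ 1 / 2 * (|z| ^ k / Gamma (k * α + 1)) * Gamma (k * α + 1 + α) := by gcongr

theorem integral_sub_rpow_mul_rpow {α r X : ℝ} (hα : 0 < α) (hr : -1 < r) (hX : 0 < X) :
    ∫ v in (0 : ℝ)..X, (X - v) ^ (α - 1) * v ^ r
      = Gamma (r + 1) * Gamma α / Gamma (r + 1 + α) * X ^ (r + α) := by
  have h := integral_rpow_mul_sub_rpow (p := r + 1) (q := α) (by linarith) hα hX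
  rw [add_sub_cancel_right, show r + 1 + α - 1 = r + α by ring] at h
  simp_rw [mul_comm ((X - _) ^ (α - 1))]
  rw [h, mul_comm]

theorem intervalIntegrable_sub_rpow_mul_rpow {α r X : ℝ} (hα : 0 < α) (hr : -1 < r)
    (hX : 0 < X) : IntervalIntegrable (fun v => (X - v) ^ (α - 1) * v ^ r) volume 0 X := by
  refine intervalIntegral.intervalIntegrable_of_integral_ne_zero ?_
  rw [integral_sub_rpow_mul_rpow hα hr hX]
  have := Gamma_pos_of_pos (show 0 < r + 1 by linarith)
  have := Gamma_pos_of_pos (show 0 < r + 1 + α by linarith)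
  have := Gamma_pos_of_pos hα
  positivity

theorem ML_sub_one_eq_tsum {α : ℝ} (hα : 0 < α) (z : ℝ) :
    ML α z - 1 = ∑' k : ℕ, z ^ (k + 1) / Gamma ((k + 1 : ℕ) * α + 1) := by
  rw [ML, (summable_mittagLeffler hα z).tsum_eq_zero_add]
  simp

theorem integral_mittagLeffler_term {α c X : ℝ} (hα : 0 < α) (hc : c ≠ 0) (hX : 0 < X)
    (k : ℕ) :
    ∫ v in (0 : ℝ)..X, c ^ k / Gamma (k * α + 1) * ((X - v) ^ (α - 1) * v ^ (k * α))
      = Gamma α / c * ((c * X ^ α) ^ (k + 1) / Gamma ((k + 1 : ℕ) * α + 1)) := by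
  have hkα : 0 ≤ (k : ℝ) * α := by positivity
  rw [intervalIntegral.integral_const_mul, integral_sub_rpow_mul_rpow hα (by linarith) hX,
    mul_pow, ← rpow_natCast (X ^ α), ← rpow_mul hX.le]
  have hcast : ((k + 1 : ℕ) : ℝ) * α + 1 = k * α + 1 + α := by push_cast; ring
  have hexp : α * ((k + 1 : ℕ) : ℝ) = k * α + α := by push_cast; ring
  have := (Gamma_pos_of_pos (show 0 < (k : ℝ) * α + 1 by linarith)).ne'
  rw [hcast, hexp]
  field_simp
  ring

theorem integral_sub_rpow_mul_mittagLeffler {α lam X : ℝ} (hα : 0 < α) (hlam : lam ≠ 0)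
    (hX : 0 ≤ X) :
    ∫ v in (0 : ℝ)..X, (X - v) ^ (α - 1) * ML α (lam * v ^ α)
      = Gamma α / lam * (ML α (lam * X ^ α) - 1) := by
  rcases hX.eq_or_lt with rfl | hX_pos
  · simp [ML_sub_one_eq_tsum hα, zero_rpow hα.ne']
  set F : ℕ → ℝ → ℝ := fun k v =>
    lam ^ k / Gamma (k * α + 1) * ((X - v) ^ (α - 1) * v ^ (k * α))
  have hexpand : ∀ v ∈ Ioc 0 X, (X - v) ^ (α - 1) * ML α (lam * v ^ α) = ∑' k, F k v := by
    intro v hv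
    rw [ML, ← tsum_mul_left]
    refine tsum_congr fun k => ?_
    rw [mul_pow, ← rpow_natCast (v ^ α), ← rpow_mul hv.1.le, mul_comm α]
    ring
  have hint (k : ℕ) : Integrable (F k) (volume.restrict (Ioc 0 X)) :=
    ((intervalIntegrable_sub_rpow_mul_rpow (r := k * α) hα
      (neg_one_lt_zero.trans_le (by positivity)) hX_pos).1).const_mul _
  have hnorm (k : ℕ) : ∫ v in Ioc 0 X, ‖F k v‖
      = Gamma α / |lam| * ((|lam| * X ^ α) ^ (k + 1) / Gamma ((k + 1 : ℕ) * α + 1)) := by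
    rw [← integral_mittagLeffler_term hα (abs_ne_zero.2 hlam) hX_pos k,
      intervalIntegral.integral_of_le hX_pos.le]
    refine setIntegral_congr_fun measurableSet_Ioc fun v hv => ?_
    have hΓ := Gamma_pos_of_pos (show 0 < (k : ℝ) * α + 1 by positivity)
    have hXv := sub_nonneg.2 hv.2
    simp only [F, norm_mul, norm_div, norm_pow, Real.norm_eq_abs, abs_of_pos hΓ,
      abs_of_nonneg (rpow_nonneg hXv _), abs_of_nonneg (rpow_nonneg hv.1.le _)]
  have hsum : Summable fun k => ∫ v in Ioc 0 X, ‖F k v‖ := by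
    simp_rw [hnorm]
    exact ((summable_nat_add_iff 1).2 (summable_mittagLeffler hα _)).mul_left _
  calc ∫ v in (0 : ℝ)..X, (X - v) ^ (α - 1) * ML α (lam * v ^ α)
      = ∫ v in Ioc 0 X, ∑' k, F k v := by
        rw [intervalIntegral.integral_of_le hX_pos.le]
        exact setIntegral_congr_fun measurableSet_Ioc hexpand
    _ = ∑' k, ∫ v in Ioc 0 X, F k v := (integral_tsum_of_summable_integral_norm hint hsum).symm
    _ = ∑' k : ℕ, Gamma α / lam * ((lam * X ^ α) ^ (k + 1) / Gamma ((k + 1 : ℕ) * α + 1)) := by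
        simp_rw [F, ← intervalIntegral.integral_of_le hX_pos.le,
          integral_mittagLeffler_term hα hlam hX_pos]
    _ = Gamma α / lam * (ML α (lam * X ^ α) - 1) := by
        rw [tsum_mul_left, ML_sub_one_eq_tsum hα]

theorem psiInt_comp_sub {ψ G : ℝ → ℝ} {a t α : ℝ} (hat : a ≤ t)
    (hmono : MonotoneOn ψ (Icc a t)) (hcont : ContinuousOn ψ (Icc a t))
    (hderiv : ∀ τ ∈ Ioo a t, HasDerivAt ψ (deriv ψ τ) τ) :
    psiInt ψ a α (fun s => G (ψ s - ψ a)) t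
      = 1 / Gamma α * ∫ v in (0 : ℝ)..ψ t - ψ a, (ψ t - ψ a - v) ^ (α - 1) * G v := by
  have hderiv_nonneg (τ : ℝ) (hτ : τ ∈ Ioo a t) : 0 ≤ deriv ψ τ :=
    (hderiv τ hτ).hasDerivWithinAt.nonneg_of_monotoneOn (isOpen_Ioo.preperfect τ hτ)
      (hmono.mono Ioo_subset_Icc_self)
  have hsubst := intervalIntegral.integral_comp_mul_deriv_of_deriv_nonneg
    (g := fun u => (ψ t - u) ^ (α - 1) * G (u - ψ a)) (by rwa [uIcc_of_le hat])
    (by rwa [min_eq_left hat, max_eq_right hat]) (by rwa [min_eq_left hat, max_eq_right hat])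
  have hshift := intervalIntegral.integral_comp_sub_right
    (fun v => (ψ t - ψ a - v) ^ (α - 1) * G v) (a := ψ a) (b := ψ t) (ψ a)
  simp only [sub_sub_sub_cancel_right, sub_self] at hshift
  rw [psiInt, ← hshift, ← hsubst]
  congr 2 with τ
  simp only [Function.comp_apply]
  ring

theorem psiInt_mittagLeffler_general (a b α lam : ℝ) (ψ : ℝ → ℝ)
    (hψmono : StrictMonoOn ψ (Icc a b)) (hψdiff : ContDiffOn ℝ 1 ψ (Icc a b))
    (hα : 0 < α) (hlam : lam ≠ 0) :
    ∀ t ∈ Icc a b,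
      psiInt ψ a α (fun s => ML α (lam * (ψ s - ψ a) ^ α)) t
        = (1 / lam) * (ML α (lam * (ψ t - ψ a) ^ α) - 1) := by
  intro t ht
  have hsub : Icc a t ⊆ Icc a b := Icc_subset_Icc_right ht.2
  have hderiv (τ : ℝ) (hτ : τ ∈ Ioo a t) : HasDerivAt ψ (deriv ψ τ) τ :=
    ((hψdiff.differentiableOn one_ne_zero τ (hsub (Ioo_subset_Icc_self hτ))).differentiableAt
      (Icc_mem_nhds hτ.1 (hτ.2.trans_le ht.2))).hasDerivAt
  have hX : 0 ≤ ψ t - ψ a :=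
    sub_nonneg.2 (hψmono.monotoneOn (left_mem_Icc.2 (ht.1.trans ht.2)) ht ht.1)
  rw [psiInt_comp_sub (G := fun v => ML α (lam * v ^ α)) ht.1 (hψmono.monotoneOn.mono hsub)
    (hψdiff.continuousOn.mono hsub) hderiv, integral_sub_rpow_mul_mittagLeffler hα hlam hX]
  have := (Gamma_pos_of_pos hα).ne'
  field_simp

/-- fractional integral of the Mittag-Leffler function. -/
theorem psiInt_mittagLeffler (a b α lam : ℝ) (ψ : ℝ → ℝ) (hab : a < b)
    (hψmono : StrictMonoOn ψ (Icc a b)) (hψdiff : ContDiffOn ℝ 1 ψ (Icc a b))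
    (hψ' : ∀ t ∈ Icc a b, deriv ψ t ≠ 0)
    (hα : 0 < α) (hlam : lam ≠ 0) :
    ∀ t ∈ Icc a b,
      psiInt ψ a α (fun s => ML α (lam * (ψ s - ψ a) ^ α)) t
        = (1 / lam) * (ML α (lam * (ψ t - ψ a) ^ α) - 1) :=
  psiInt_mittagLeffler_general a b α lam ψ hψmono hψdiff hα hlam
end

section
/- Let x ∈ B_R := {x ∈ C[a,b] : ‖x‖_∞ ≤ R} and suppose the growth and radius hypotheses of the Leray–Schauder existence theorem hold. Then the operator F defined by F(x)(t) := I_{a+}^{α,ψ} f(t,x(t)) + x_a + (x_a¹/ψ'(a))(ψ(t)−ψ(a)) + γ_x(ψ(t)−ψ(a))² maps B_R into B_R, i.e. ‖F(x)‖_∞ ≤ R. -/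
/-!
The ψ-fractional integral has the nonnegative kernel ψ'(τ)(ψ(t) − ψ(τ))^(α−1), so `|g| ≤ h`
gives `|I^α g| ≤ I^α h`. On the ball the growth condition gives
`|f(s, x(s))| ≤ |F₁(s)| Λ(R) + |F₂(s)|`, which bounds `I^α f(·, x)(t)` by the suprema in
`ω₁, ω₂`, and `|γ_x|` by `(|I^α f(·, x)(b)| + K |I^{2α} f(·, x)(v)| + |c|)/N` with `c` the part
of `γ_x N` not involving `f`. The triangle inequality for `F x` then yields exactly the left-hand
side of the radius hypothesis.
-/

open Real Set

open MeasureTheory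

lemma le_biSup_of_bddAbove {β : Type*} {s : Set β} {g : β → ℝ} (hg : BddAbove (g '' s))
    {t : β} (ht : t ∈ s) : g t ≤ ⨆ r ∈ s, g r :=
  le_ciSup₂ (f := fun r (_ : r ∈ s) => g r) (hg.mono fun y hy => by
    obtain ⟨r, hr, rfl⟩ : ∃ r ∈ s, g r = y := by simpa using hy
    exact mem_image_of_mem g hr) t ht

section PsiIntegral

variable {ψ : ℝ → ℝ} {a b : ℝ}

/-- `ψ` is only differentiable within `Icc a b`, so `deriv ψ` may be junk at `a` and `b`. -/
lemma ae_deriv_eq_derivWithin_Icc :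
    ∀ᵐ τ, τ ∈ Icc a b → deriv ψ τ = derivWithin ψ (Icc a b) τ := by
  filter_upwards [measure_eq_zero_iff_ae_notMem.1 ((toFinite {a, b}).measure_zero volume)]
    with τ hτab hτ
  simp only [mem_insert_iff, mem_singleton_iff, not_or] at hτab
  exact (derivWithin_of_mem_nhds (Icc_mem_nhds (hτ.1.lt_of_ne' hτab.1)
    (hτ.2.lt_of_ne hτab.2))).symm

lemma integrableOn_deriv_Icc (hab : a < b) (hψ : ContDiffOn ℝ 1 ψ (Icc a b)) :
    IntegrableOn (deriv ψ) (Icc a b) := by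
  have h : deriv ψ =ᵐ[volume.restrict (Icc a b)] derivWithin ψ (Icc a b) :=
    (ae_restrict_iff' measurableSet_Icc).2 ae_deriv_eq_derivWithin_Icc
  exact (hψ.continuousOn_derivWithin (uniqueDiffOn_Icc hab) le_rfl).integrableOn_Icc.congr_fun_ae
    h.symm

lemma exists_ae_abs_deriv_le (hab : a < b) (hψ : ContDiffOn ℝ 1 ψ (Icc a b)) :
    ∃ C, 0 ≤ C ∧ ∀ᵐ τ, τ ∈ Icc a b → |deriv ψ τ| ≤ C := by
  obtain ⟨C, hC⟩ := isCompact_Icc.exists_bound_of_continuousOn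
    (hψ.continuousOn_derivWithin (uniqueDiffOn_Icc hab) le_rfl)
  refine ⟨C, (norm_nonneg _).trans (hC a (left_mem_Icc.2 hab.le)), ?_⟩
  filter_upwards [ae_deriv_eq_derivWithin_Icc] with τ hτ hτab
  rw [hτ hτab]
  exact hC τ hτab

lemma deriv_mul_rpow_sub_nonneg (hmono : MonotoneOn ψ (Icc a b))
    (hψ' : ∀ τ ∈ Icc a b, 0 ≤ deriv ψ τ) (α : ℝ) {t τ : ℝ} (ht : t ∈ Icc a b) (hτ : τ ∈ Icc a t) :
    0 ≤ deriv ψ τ * (ψ t - ψ τ) ^ (α - 1) := by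
  have hτ' : τ ∈ Icc a b := ⟨hτ.1, hτ.2.trans ht.2⟩
  exact mul_nonneg (hψ' τ hτ') (rpow_nonneg (sub_nonneg.2 (hmono hτ' ht hτ.2)) _)

lemma intervalIntegrable_deriv_mul_rpow_sub_mul (hab : a < b) (hψ : ContDiffOn ℝ 1 ψ (Icc a b))
    {α : ℝ} (hα : 1 ≤ α) {t : ℝ} (ht : t ∈ Icc a b) {u : ℝ → ℝ}
    (hu : ContinuousOn u (Icc a b)) :
    IntervalIntegrable (fun τ => deriv ψ τ * (ψ t - ψ τ) ^ (α - 1) * u τ) volume a t := by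
  have hsub : uIcc a t ⊆ Icc a b := by
    rw [uIcc_of_le ht.1]; exact Icc_subset_Icc_right ht.2
  have hderiv : IntervalIntegrable (deriv ψ) volume a t :=
    ((integrableOn_deriv_Icc hab hψ).mono_set hsub).intervalIntegrable
  refine (hderiv.mul_continuousOn ?_).mul_continuousOn (hu.mono hsub)
  exact ((continuousOn_const.sub hψ.continuousOn).rpow_const
    fun _ _ => Or.inr (by linarith)).mono hsub

lemma psiInt_mul_const (α c t : ℝ) (u : ℝ → ℝ) :
    psiInt ψ a α (fun s => u s * c) t = psiInt ψ a α u t * c := by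
  simp only [psiInt, ← mul_assoc, intervalIntegral.integral_mul_const]

lemma psiInt_add (hab : a < b) (hψ : ContDiffOn ℝ 1 ψ (Icc a b)) {α : ℝ} (hα : 1 ≤ α)
    {t : ℝ} (ht : t ∈ Icc a b) {u w : ℝ → ℝ} (hu : ContinuousOn u (Icc a b))
    (hw : ContinuousOn w (Icc a b)) :
    psiInt ψ a α (fun s => u s + w s) t = psiInt ψ a α u t + psiInt ψ a α w t := by
  rw [psiInt, psiInt, psiInt, ← mul_add, ← intervalIntegral.integral_add
    (intervalIntegrable_deriv_mul_rpow_sub_mul hab hψ hα ht hu)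
    (intervalIntegrable_deriv_mul_rpow_sub_mul hab hψ hα ht hw)]
  simp only [mul_add]

lemma abs_psiInt_le (hab : a < b) (hψ : ContDiffOn ℝ 1 ψ (Icc a b))
    (hmono : MonotoneOn ψ (Icc a b)) (hψ' : ∀ τ ∈ Icc a b, 0 ≤ deriv ψ τ) {α : ℝ}
    (hα : 1 ≤ α) {t : ℝ} (ht : t ∈ Icc a b) {g h : ℝ → ℝ} (hh : ContinuousOn h (Icc a b))
    (hgh : ∀ s ∈ Icc a b, |g s| ≤ h s) :
    |psiInt ψ a α g t| ≤ psiInt ψ a α h t := by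
  have hΓ : 0 < 1 / Gamma α := one_div_pos.2 (Gamma_pos_of_pos (by linarith))
  rw [psiInt, psiInt, abs_mul, abs_of_pos hΓ]
  refine mul_le_mul_of_nonneg_left ?_ hΓ.le
  refine intervalIntegral.norm_integral_le_of_norm_le ht.1
    (f := fun τ => deriv ψ τ * (ψ t - ψ τ) ^ (α - 1) * g τ)
    (g := fun τ => deriv ψ τ * (ψ t - ψ τ) ^ (α - 1) * h τ) (ae_of_all _ fun τ hτ => ?_)
    (intervalIntegrable_deriv_mul_rpow_sub_mul hab hψ hα ht hh)
  have hk := deriv_mul_rpow_sub_nonneg hmono hψ' α ht (Ioc_subset_Icc_self hτ)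
  rw [Real.norm_eq_abs, abs_mul, abs_of_nonneg hk]
  exact mul_le_mul_of_nonneg_left (hgh τ ⟨hτ.1.le, hτ.2.trans ht.2⟩) hk

lemma abs_psiInt_le_of_abs_le_mul_add (hab : a < b) (hψ : ContDiffOn ℝ 1 ψ (Icc a b))
    (hmono : MonotoneOn ψ (Icc a b)) (hψ' : ∀ τ ∈ Icc a b, 0 ≤ deriv ψ τ) {α : ℝ}
    (hα : 1 ≤ α) {t : ℝ} (ht : t ∈ Icc a b) {g h₁ h₂ : ℝ → ℝ} {c : ℝ}
    (hh₁ : ContinuousOn h₁ (Icc a b)) (hh₂ : ContinuousOn h₂ (Icc a b))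
    (hg : ∀ s ∈ Icc a b, |g s| ≤ h₁ s * c + h₂ s) :
    |psiInt ψ a α g t| ≤ psiInt ψ a α h₁ t * c + psiInt ψ a α h₂ t := by
  have hh₁c : ContinuousOn (fun s => h₁ s * c) (Icc a b) := hh₁.mul continuousOn_const
  rw [← psiInt_mul_const α c t h₁, ← psiInt_add hab hψ hα ht hh₁c hh₂]
  exact abs_psiInt_le hab hψ hmono hψ' hα ht (hh₁c.add hh₂) hg

lemma bddAbove_psiInt (hab : a < b) (hψ : ContDiffOn ℝ 1 ψ (Icc a b))
    (hmono : MonotoneOn ψ (Icc a b)) {α : ℝ} (hα : 1 ≤ α) {u : ℝ → ℝ}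
    (hu : ContinuousOn u (Icc a b)) :
    BddAbove (psiInt ψ a α u '' Icc a b) := by
  obtain ⟨C₁, hC₁0, hC₁⟩ := exists_ae_abs_deriv_le hab hψ
  obtain ⟨C₂, hC₂⟩ := isCompact_Icc.exists_bound_of_continuousOn hu
  have ha : a ∈ Icc a b := left_mem_Icc.2 hab.le
  have hb : b ∈ Icc a b := right_mem_Icc.2 hab.le
  have hC₂0 : 0 ≤ C₂ := (norm_nonneg _).trans (hC₂ a ha)
  have hW0 : 0 ≤ (ψ b - ψ a) ^ (α - 1) := rpow_nonneg (sub_nonneg.2 (hmono ha hb hab.le)) _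
  refine ⟨1 / Gamma α * (C₁ * (ψ b - ψ a) ^ (α - 1) * C₂ * (b - a)), ?_⟩
  rintro _ ⟨t, ht, rfl⟩
  have hΓ : 0 ≤ 1 / Gamma α := (one_div_pos.2 (Gamma_pos_of_pos (by linarith))).le
  have hint : ‖∫ τ in a..t, deriv ψ τ * (ψ t - ψ τ) ^ (α - 1) * u τ‖
      ≤ C₁ * (ψ b - ψ a) ^ (α - 1) * C₂ * |t - a| := by
    refine intervalIntegral.norm_integral_le_of_norm_le_const_ae ?_
    filter_upwards [hC₁] with τ hτC hτ
    rw [uIoc_of_le ht.1] at hτ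
    have hτ' : τ ∈ Icc a b := ⟨hτ.1.le, hτ.2.trans ht.2⟩
    have hψτ : 0 ≤ ψ t - ψ τ := sub_nonneg.2 (hmono hτ' ht hτ.2)
    have hW : (ψ t - ψ τ) ^ (α - 1) ≤ (ψ b - ψ a) ^ (α - 1) :=
      rpow_le_rpow hψτ (by linarith [hmono ht hb ht.2, hmono ha hτ' hτ'.1]) (by linarith)
    rw [Real.norm_eq_abs, abs_mul, abs_mul, abs_of_nonneg (rpow_nonneg hψτ _)]
    have hu' : |u τ| ≤ C₂ := hC₂ τ hτ'
    gcongr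
    exact hτC hτ'
  calc psiInt ψ a α u t ≤ |psiInt ψ a α u t| := le_abs_self _
    _ ≤ _ := by
      rw [psiInt, abs_mul, abs_of_nonneg hΓ]
      gcongr
      refine hint.trans (mul_le_mul_of_nonneg_left ?_ (by positivity))
      rw [abs_of_nonneg (sub_nonneg.2 ht.1)]
      linarith [ht.2]

end PsiIntegral

section Volterra

variable {ψ : ℝ → ℝ} {a b v α K xa xa1 N : ℝ}

lemma abs_gammaX_le (f : ℝ → ℝ → ℝ) (x : ℝ → ℝ) (hK : 0 ≤ K) (hN : 0 < N) :
    |gammaX ψ a b v α K xa xa1 N f x|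
      ≤ (|psiInt ψ a α (fun s => f s (x s)) b|
          + K * |psiInt ψ a (2 * α) (fun s => f s (x s)) v|
          + |xa * (1 - K / Gamma (1 + α) * (ψ v - ψ a) ^ α)
              + xa1 / deriv ψ a * (ψ b - ψ a - K / Gamma (2 + α) * (ψ v - ψ a) ^ (1 + α))|)
        / N := by
  rw [gammaX, abs_div, abs_of_pos hN, add_assoc]
  gcongr
  refine (abs_add_le _ _).trans (add_le_add_left ((abs_sub _ _).trans_eq ?_) _)
  rw [abs_mul, abs_of_nonneg hK]

lemma abs_Fop_le (f : ℝ → ℝ → ℝ) (x : ℝ → ℝ) {t : ℝ} (hat : ψ a ≤ ψ t) (htb : ψ t ≤ ψ b)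
    (hψ'a : 0 ≤ deriv ψ a) :
    |Fop ψ a b v α K xa xa1 N f x t|
      ≤ |psiInt ψ a α (fun s => f s (x s)) t| + |xa| + |xa1| / deriv ψ a * (ψ b - ψ a)
        + |gammaX ψ a b v α K xa xa1 N f x| * (ψ b - ψ a) ^ 2 := by
  have hat' : 0 ≤ ψ t - ψ a := sub_nonneg.2 hat
  rw [Fop]
  refine (abs_add_le _ _).trans
    (add_le_add ((abs_add_le _ _).trans (add_le_add (abs_add_le _ _) ?_)) ?_)
  · rw [abs_mul, abs_div, abs_of_nonneg hψ'a, abs_of_nonneg hat']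
    gcongr
  · rw [abs_mul, abs_of_nonneg (sq_nonneg (ψ t - ψ a))]
    gcongr

end Volterra

theorem Fop_maps_ball_general (a b v α K xa xa1 R : ℝ) (ψ : ℝ → ℝ)
    (f : ℝ → ℝ → ℝ) (F₁ F₂ : ℝ → ℝ) (Lam : ℝ → ℝ) (hab : a < b) (hv : v ∈ Ioc a b)
    (hψmono : StrictMonoOn ψ (Icc a b)) (hψdiff : ContDiffOn ℝ 1 ψ (Icc a b))
    (hψ' : ∀ t ∈ Icc a b, 0 < deriv ψ t)
    (hα : α ∈ Set.Ioo (2 : ℝ) 3) (hK : 0 < K)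
    (hN : 0 < 2 * K / Real.Gamma (3 + α) * (ψ v - ψ a) ^ (2 + α) - (ψ b - ψ a) ^ 2)
    (hF₁ : ContinuousOn F₁ (Icc a b)) (hF₂ : ContinuousOn F₂ (Icc a b))
    (hLam : ∀ r s : ℝ, 0 ≤ r → r ≤ s → Lam r ≤ Lam s) (hLam0 : ∀ r : ℝ, 0 ≤ Lam r)
    (hgrowth : ∀ t ∈ Icc a b, ∀ y : ℝ, |f t y| ≤ F₁ t * Lam |y| + F₂ t)
    (hball :
      ((⨆ t ∈ Icc a b, psiInt ψ a α (fun s => |F₁ s|) t)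
          + (psiInt ψ a α (fun s => |F₁ s|) b + K * psiInt ψ a (2 * α) (fun s => |F₁ s|) v)
            * (ψ b - ψ a) ^ 2
            / (2 * K / Real.Gamma (3 + α) * (ψ v - ψ a) ^ (2 + α) - (ψ b - ψ a) ^ 2))
          * Lam R
        + ((⨆ t ∈ Icc a b, psiInt ψ a α (fun s => |F₂ s|) t)
          + (psiInt ψ a α (fun s => |F₂ s|) b + K * psiInt ψ a (2 * α) (fun s => |F₂ s|) v)
            * (ψ b - ψ a) ^ 2
            / (2 * K / Real.Gamma (3 + α) * (ψ v - ψ a) ^ (2 + α) - (ψ b - ψ a) ^ 2))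
        + |xa| + |xa1| / deriv ψ a * (ψ b - ψ a)
        + |xa * (1 - K / Real.Gamma (1 + α) * (ψ v - ψ a) ^ α)
            + xa1 / deriv ψ a
              * (ψ b - ψ a - K / Real.Gamma (2 + α) * (ψ v - ψ a) ^ (1 + α))|
          * (ψ b - ψ a) ^ 2
          / (2 * K / Real.Gamma (3 + α) * (ψ v - ψ a) ^ (2 + α) - (ψ b - ψ a) ^ 2)
        ≤ R) :
    ∀ x : ℝ → ℝ, ContinuousOn x (Icc a b) → (∀ t ∈ Icc a b, |x t| ≤ R) →
      ∀ t ∈ Icc a b,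
        |Fop ψ a b v α K xa xa1
            (2 * K / Real.Gamma (3 + α) * (ψ v - ψ a) ^ (2 + α) - (ψ b - ψ a) ^ 2)
            f x t| ≤ R := by
  intro x _ hxR t ht
  set N := 2 * K / Gamma (3 + α) * (ψ v - ψ a) ^ (2 + α) - (ψ b - ψ a) ^ 2
  set A := xa * (1 - K / Gamma (1 + α) * (ψ v - ψ a) ^ α)
    + xa1 / deriv ψ a * (ψ b - ψ a - K / Gamma (2 + α) * (ψ v - ψ a) ^ (1 + α))
  have hmono : MonotoneOn ψ (Icc a b) := hψmono.monotoneOn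
  have hψ'0 : ∀ τ ∈ Icc a b, 0 ≤ deriv ψ τ := fun τ hτ => (hψ' τ hτ).le
  have hα1 : 1 ≤ α := by linarith [hα.1]
  have ha : a ∈ Icc a b := left_mem_Icc.2 hab.le
  have hb : b ∈ Icc a b := right_mem_Icc.2 hab.le
  have hfx : ∀ s ∈ Icc a b, |f s (x s)| ≤ |F₁ s| * Lam R + |F₂ s| := fun s hs =>
    (hgrowth s hs (x s)).trans (add_le_add (mul_le_mul (le_abs_self _)
      (hLam _ _ (abs_nonneg _) (hxR s hs)) (hLam0 _) (abs_nonneg _)) (le_abs_self _))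
  have hI : ∀ β, 1 ≤ β → ∀ s ∈ Icc a b, |psiInt ψ a β (fun s => f s (x s)) s|
      ≤ psiInt ψ a β (fun s => |F₁ s|) s * Lam R + psiInt ψ a β (fun s => |F₂ s|) s :=
    fun β hβ s hs =>
      abs_psiInt_le_of_abs_le_mul_add hab hψdiff hmono hψ'0 hβ hs hF₁.abs hF₂.abs hfx
  have hsup : ∀ {u : ℝ → ℝ}, ContinuousOn u (Icc a b) →
      psiInt ψ a α u t ≤ ⨆ r ∈ Icc a b, psiInt ψ a α u r :=
    fun hu => le_biSup_of_bddAbove (bddAbove_psiInt hab hψdiff hmono hα1 hu) ht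
  have hIt : |psiInt ψ a α (fun s => f s (x s)) t|
      ≤ (⨆ r ∈ Icc a b, psiInt ψ a α (fun s => |F₁ s|) r) * Lam R
        + ⨆ r ∈ Icc a b, psiInt ψ a α (fun s => |F₂ s|) r :=
    (hI α hα1 t ht).trans (add_le_add (mul_le_mul_of_nonneg_right (hsup hF₁.abs) (hLam0 R))
      (hsup hF₂.abs))
  have hγ : |gammaX ψ a b v α K xa xa1 N f x| * (ψ b - ψ a) ^ 2
      ≤ (psiInt ψ a α (fun s => |F₁ s|) b * Lam R + psiInt ψ a α (fun s => |F₂ s|) b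
          + K * (psiInt ψ a (2 * α) (fun s => |F₁ s|) v * Lam R
            + psiInt ψ a (2 * α) (fun s => |F₂ s|) v) + |A|) / N * (ψ b - ψ a) ^ 2 := by
    refine mul_le_mul_of_nonneg_right ((abs_gammaX_le f x hK.le hN).trans ?_) (sq_nonneg _)
    gcongr
    exacts [hI α hα1 b hb, hI (2 * α) (by linarith) v (Ioc_subset_Icc_self hv)]
  refine (abs_Fop_le f x (hmono ha ht ht.1) (hmono ht hb ht.2) (hψ'0 a ha)).trans ?_
  linear_combination hIt + hγ + hball

/-- the operator F maps the closed ball B_R into itself. -/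
theorem Fop_maps_ball (a b v α K xa xa1 R : ℝ) (ψ : ℝ → ℝ)
    (f : ℝ → ℝ → ℝ) (F₁ F₂ : ℝ → ℝ) (Lam : ℝ → ℝ) (hab : a < b) (hv : v ∈ Ioc a b)
    (hψmono : StrictMonoOn ψ (Icc a b)) (hψdiff : ContDiffOn ℝ 1 ψ (Icc a b))
    (hψ' : ∀ t ∈ Icc a b, 0 < deriv ψ t)
    (hα : α ∈ Set.Ioo (2 : ℝ) 3) (hK : 0 < K)
    (hf : ContinuousOn (fun p : ℝ × ℝ => f p.1 p.2) (Icc a b ×ˢ univ))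
    (hN : 0 < 2 * K / Real.Gamma (3 + α) * (ψ v - ψ a) ^ (2 + α) - (ψ b - ψ a) ^ 2)
    (hF₁ : ContinuousOn F₁ (Icc a b)) (hF₂ : ContinuousOn F₂ (Icc a b))
    (hLam : ∀ r s : ℝ, 0 ≤ r → r ≤ s → Lam r ≤ Lam s) (hLam0 : ∀ r : ℝ, 0 ≤ Lam r)
    (hgrowth : ∀ t ∈ Icc a b, ∀ y : ℝ, |f t y| ≤ F₁ t * Lam |y| + F₂ t)
    (hR : 0 < R)
    (hball :
      ((⨆ t ∈ Icc a b, psiInt ψ a α (fun s => |F₁ s|) t)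
          + (psiInt ψ a α (fun s => |F₁ s|) b + K * psiInt ψ a (2 * α) (fun s => |F₁ s|) v)
            * (ψ b - ψ a) ^ 2
            / (2 * K / Real.Gamma (3 + α) * (ψ v - ψ a) ^ (2 + α) - (ψ b - ψ a) ^ 2))
          * Lam R
        + ((⨆ t ∈ Icc a b, psiInt ψ a α (fun s => |F₂ s|) t)
          + (psiInt ψ a α (fun s => |F₂ s|) b + K * psiInt ψ a (2 * α) (fun s => |F₂ s|) v)
            * (ψ b - ψ a) ^ 2
            / (2 * K / Real.Gamma (3 + α) * (ψ v - ψ a) ^ (2 + α) - (ψ b - ψ a) ^ 2))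
        + |xa| + |xa1| / deriv ψ a * (ψ b - ψ a)
        + |xa * (1 - K / Real.Gamma (1 + α) * (ψ v - ψ a) ^ α)
            + xa1 / deriv ψ a
              * (ψ b - ψ a - K / Real.Gamma (2 + α) * (ψ v - ψ a) ^ (1 + α))|
          * (ψ b - ψ a) ^ 2
          / (2 * K / Real.Gamma (3 + α) * (ψ v - ψ a) ^ (2 + α) - (ψ b - ψ a) ^ 2)
        ≤ R) :
    ∀ x : ℝ → ℝ, ContinuousOn x (Icc a b) → (∀ t ∈ Icc a b, |x t| ≤ R) →
      ∀ t ∈ Icc a b,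
        |Fop ψ a b v α K xa xa1
            (2 * K / Real.Gamma (3 + α) * (ψ v - ψ a) ^ (2 + α) - (ψ b - ψ a) ^ 2)
            f x t| ≤ R :=
  Fop_maps_ball_general a b v α K xa xa1 R ψ f F₁ F₂ Lam hab hv hψmono hψdiff hψ' hα hK hN hF₁ hF₂
    hLam hLam0 hgrowth hball
end

section
/- Under the hypotheses of the Leray–Schauder existence theorem, the image F(B_R) of the closed ball B_R under the operator F is equicontinuous; in particular, for x ∈ B_R and a ≤ t₂ < t₁ ≤ b, |F(x)(t₁) − F(x)(t₂)| ≤ (M/Γ(α+1))[(ψ(t₁)−ψ(a))^α − (ψ(t₂)−ψ(a))^α] + (|x_a¹|/ψ'(a))(ψ(t₁)−ψ(t₂)) + |γ_x|[(ψ(t₁)−ψ(a))² − (ψ(t₂)−ψ(a))²], where M := max{|f(t,x)| : t ∈ [a,b], |x| ≤ R}. -/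
open Real Set

/-! The fractional integral is `Γ(α) I^α g (t) = ∫_a^t k_t(τ) g(τ) dτ` with the kernel
`k_t(τ) = ψ'(τ) (ψ t - ψ τ)^(α-1)`, which is nonnegative and increasing in `t`. Hence
`Γ(α) |I^α g (t₁) - I^α g (t₂)| ≤ M (∫_a^{t₁} k_{t₁} - ∫_a^{t₂} k_{t₂})`, and
`∫_a^t k_t = (ψ t - ψ a)^α / α` because `k_t` is the derivative of `-(ψ t - ψ ·)^α / α`.
The other two terms of `F x t₁ - F x t₂` are explicit in `ψ t₁` and `ψ t₂`. -/

open MeasureTheory intervalIntegral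

noncomputable def psiKernel (ψ : ℝ → ℝ) (α t τ : ℝ) : ℝ :=
  deriv ψ τ * (ψ t - ψ τ) ^ (α - 1)

lemma hasDerivAt_neg_rpow_sub_div {ψ : ℝ → ℝ} {α c τ : ℝ} (hα : 1 ≤ α)
    (hψ : DifferentiableAt ℝ ψ τ) :
    HasDerivAt (fun τ => -(ψ c - ψ τ) ^ α / α) (psiKernel ψ α c τ) τ := by
  have hsub : HasDerivAt (fun τ => ψ c - ψ τ) (0 - deriv ψ τ) τ :=
    (hasDerivAt_const τ (ψ c)).sub hψ.hasDerivAt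
  refine ((hsub.rpow_const (Or.inr hα)).neg.div_const α).congr_deriv ?_
  have : α ≠ 0 := by linarith
  simp only [psiKernel]
  field_simp
  ring

section PsiKernel

variable {ψ : ℝ → ℝ} {a t α : ℝ}

lemma psiKernel_nonneg (hψ : MonotoneOn ψ (Icc a t)) {τ : ℝ} (hτ : τ ∈ Icc a t)
    (hψ' : 0 ≤ deriv ψ τ) : 0 ≤ psiKernel ψ α t τ :=
  mul_nonneg hψ' (Real.rpow_nonneg (sub_nonneg.mpr
    (hψ hτ (right_mem_Icc.mpr (hτ.1.trans hτ.2)) hτ.2)) _)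

lemma psiKernel_le_psiKernel (hα : 1 ≤ α) (hψ : MonotoneOn ψ (Icc a t)) {s τ : ℝ}
    (hτ : τ ∈ Icc a s) (hst : s ≤ t) (hψ' : 0 ≤ deriv ψ τ) :
    psiKernel ψ α s τ ≤ psiKernel ψ α t τ := by
  have hs : s ∈ Icc a t := ⟨hτ.1.trans hτ.2, hst⟩
  have hτs : ψ τ ≤ ψ s := hψ ⟨hτ.1, hτ.2.trans hst⟩ hs hτ.2
  have hst' : ψ s ≤ ψ t := hψ hs (right_mem_Icc.mpr (hs.1.trans hst)) hst
  exact mul_le_mul_of_nonneg_left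
    (Real.rpow_le_rpow (by linarith) (by linarith) (by linarith)) hψ'

lemma continuousOn_neg_rpow_sub_div (hα : 0 ≤ α) (hψc : ContinuousOn ψ (Icc a t)) :
    ContinuousOn (fun τ => -(ψ t - ψ τ) ^ α / α) (Icc a t) :=
  ((continuousOn_const.sub hψc).rpow_const fun _ _ => Or.inr hα).neg.div_const α

lemma intervalIntegrable_psiKernel (hat : a ≤ t) (hα : 1 ≤ α) (hψc : ContinuousOn ψ (Icc a t))
    (hψd : DifferentiableOn ℝ ψ (Ioo a t)) (hψ' : ∀ τ ∈ Ioo a t, 0 ≤ deriv ψ τ) :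
    IntervalIntegrable (psiKernel ψ α t) volume a t := by
  have hmono : MonotoneOn ψ (Icc a t) := monotoneOn_of_deriv_nonneg (convex_Icc a t) hψc
    (by rwa [interior_Icc]) (by rwa [interior_Icc])
  refine (intervalIntegrable_iff_integrableOn_Ioc_of_le hat).mpr <|
    integrableOn_deriv_of_nonneg (continuousOn_neg_rpow_sub_div (by linarith) hψc)
      (fun τ hτ => hasDerivAt_neg_rpow_sub_div hα (hψd.differentiableAt (Ioo_mem_nhds hτ.1 hτ.2)))
      fun τ hτ => psiKernel_nonneg hmono (Ioo_subset_Icc_self hτ) (hψ' τ hτ)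

lemma integral_psiKernel (hat : a ≤ t) (hα : 1 ≤ α) (hψc : ContinuousOn ψ (Icc a t))
    (hψd : DifferentiableOn ℝ ψ (Ioo a t)) (hψ' : ∀ τ ∈ Ioo a t, 0 ≤ deriv ψ τ) :
    ∫ τ in a..t, psiKernel ψ α t τ = (ψ t - ψ a) ^ α / α := by
  rw [integral_eq_sub_of_hasDerivAt_of_le hat (continuousOn_neg_rpow_sub_div (by linarith) hψc)
    (fun τ hτ => hasDerivAt_neg_rpow_sub_div hα (hψd.differentiableAt (Ioo_mem_nhds hτ.1 hτ.2)))
    (intervalIntegrable_psiKernel hat hα hψc hψd hψ'), sub_self, Real.zero_rpow (by linarith)]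
  ring

end PsiKernel

lemma abs_integral_mul_le_of_nonneg {k g : ℝ → ℝ} {s t M : ℝ} (hst : s ≤ t)
    (hk : IntervalIntegrable k volume s t) (hk0 : ∀ τ ∈ Ioc s t, 0 ≤ k τ)
    (hgM : ∀ τ ∈ Ioc s t, |g τ| ≤ M) :
    |∫ τ in s..t, k τ * g τ| ≤ M * ∫ τ in s..t, k τ := by
  rw [mul_comm, ← intervalIntegral.integral_mul_const, ← Real.norm_eq_abs]
  refine norm_integral_le_of_norm_le hst (ae_of_all _ fun τ hτ => ?_) (hk.mul_const M)
  rw [Real.norm_eq_abs, abs_mul, abs_of_nonneg (hk0 τ hτ)]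
  exact mul_le_mul_of_nonneg_left (hgM τ hτ) (hk0 τ hτ)

/-- Splitting `∫_a^{t₁} k₁ g` at `t₂`, the difference is `∫_a^{t₂} (k₁ - k₂) g + ∫_{t₂}^{t₁} k₁ g`
with both weights nonnegative. -/
lemma abs_integral_sub_integral_le {k₁ k₂ g : ℝ → ℝ} {a t₁ t₂ M : ℝ} (h₂ : a ≤ t₂)
    (h₁ : t₂ ≤ t₁) (hk₁ : IntervalIntegrable k₁ volume a t₁)
    (hk₂ : IntervalIntegrable k₂ volume a t₂) (hk : ∀ τ ∈ Ioc a t₂, k₂ τ ≤ k₁ τ)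
    (hk₁0 : ∀ τ ∈ Ioc t₂ t₁, 0 ≤ k₁ τ) (hg : ContinuousOn g (Icc a t₁))
    (hgM : ∀ τ ∈ Icc a t₁, |g τ| ≤ M) :
    |(∫ τ in a..t₁, k₁ τ * g τ) - ∫ τ in a..t₂, k₂ τ * g τ| ≤
      M * ((∫ τ in a..t₁, k₁ τ) - ∫ τ in a..t₂, k₂ τ) := by
  have hk₁l : IntervalIntegrable k₁ volume a t₂ :=
    hk₁.mono_set (by rw [uIcc_of_le h₂, uIcc_of_le (h₂.trans h₁)]; gcongr)
  have hk₁r : IntervalIntegrable k₁ volume t₂ t₁ :=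
    hk₁.mono_set (by rw [uIcc_of_le h₁, uIcc_of_le (h₂.trans h₁)]; gcongr)
  have hgl : ContinuousOn g (uIcc a t₂) := hg.mono (by rw [uIcc_of_le h₂]; gcongr)
  have hgr : ContinuousOn g (uIcc t₂ t₁) := hg.mono (by rw [uIcc_of_le h₁]; gcongr)
  have hsplit : ∀ u₁ u₂ : ℝ → ℝ, IntervalIntegrable u₁ volume a t₂ →
      IntervalIntegrable u₁ volume t₂ t₁ → IntervalIntegrable u₂ volume a t₂ →
      (∫ τ in a..t₁, u₁ τ) - ∫ τ in a..t₂, u₂ τ =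
        (∫ τ in a..t₂, u₁ τ - u₂ τ) + ∫ τ in t₂..t₁, u₁ τ := by
    intro u₁ u₂ hl hr hu₂
    rw [← integral_add_adjacent_intervals hl hr, integral_sub hl hu₂]
    ring
  rw [hsplit _ _ (hk₁l.mul_continuousOn hgl) (hk₁r.mul_continuousOn hgr)
      (hk₂.mul_continuousOn hgl), hsplit _ _ hk₁l hk₁r hk₂, mul_add]
  simp only [← sub_mul]
  refine (abs_add_le _ _).trans (add_le_add ?_ ?_)
  · exact abs_integral_mul_le_of_nonneg h₂ (hk₁l.sub hk₂)
      (fun τ hτ => sub_nonneg.mpr (hk τ hτ)) fun τ hτ => hgM τ ⟨hτ.1.le, hτ.2.trans h₁⟩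
  · exact abs_integral_mul_le_of_nonneg h₁ hk₁r hk₁0
      fun τ hτ => hgM τ ⟨h₂.trans hτ.1.le, hτ.2⟩

lemma abs_psiInt_sub_psiInt_le {ψ g : ℝ → ℝ} {a α M t₁ t₂ : ℝ} (hα : 1 ≤ α) (h₂ : a ≤ t₂)
    (h₁ : t₂ ≤ t₁) (hψc : ContinuousOn ψ (Icc a t₁)) (hψd : DifferentiableOn ℝ ψ (Ioo a t₁))
    (hψ' : ∀ τ ∈ Icc a t₁, 0 ≤ deriv ψ τ) (hg : ContinuousOn g (Icc a t₁))
    (hgM : ∀ τ ∈ Icc a t₁, |g τ| ≤ M) :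
    |psiInt ψ a α g t₁ - psiInt ψ a α g t₂| ≤
      M / Real.Gamma (α + 1) * ((ψ t₁ - ψ a) ^ α - (ψ t₂ - ψ a) ^ α) := by
  have hψ'o : ∀ τ ∈ Ioo a t₁, 0 ≤ deriv ψ τ := fun τ hτ => hψ' τ (Ioo_subset_Icc_self hτ)
  have hmono : MonotoneOn ψ (Icc a t₁) := monotoneOn_of_deriv_nonneg (convex_Icc a t₁) hψc
    (by rwa [interior_Icc]) (by rwa [interior_Icc])
  have hψc₂ : ContinuousOn ψ (Icc a t₂) := hψc.mono (Icc_subset_Icc_right h₁)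
  have hψd₂ : DifferentiableOn ℝ ψ (Ioo a t₂) := hψd.mono (Ioo_subset_Ioo_right h₁)
  have hψ'o₂ : ∀ τ ∈ Ioo a t₂, 0 ≤ deriv ψ τ := fun τ hτ => hψ'o τ ⟨hτ.1, hτ.2.trans_le h₁⟩
  have ht₁ : a ≤ t₁ := h₂.trans h₁
  have hK : ∀ τ ∈ Ioc a t₂, psiKernel ψ α t₂ τ ≤ psiKernel ψ α t₁ τ := fun τ hτ =>
    psiKernel_le_psiKernel hα hmono (Ioc_subset_Icc_self hτ) h₁ (hψ' τ ⟨hτ.1.le, hτ.2.trans h₁⟩)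
  have hK₁0 : ∀ τ ∈ Ioc t₂ t₁, 0 ≤ psiKernel ψ α t₁ τ := fun τ hτ =>
    have hτ₁ : τ ∈ Icc a t₁ := ⟨h₂.trans hτ.1.le, hτ.2⟩
    psiKernel_nonneg hmono hτ₁ (hψ' τ hτ₁)
  have hbound := abs_integral_sub_integral_le h₂ h₁
    (intervalIntegrable_psiKernel ht₁ hα hψc hψd hψ'o)
    (intervalIntegrable_psiKernel h₂ hα hψc₂ hψd₂ hψ'o₂) hK hK₁0 hg hgM
  rw [integral_psiKernel ht₁ hα hψc hψd hψ'o, integral_psiKernel h₂ hα hψc₂ hψd₂ hψ'o₂] at hbound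
  have hΓ : 0 < Real.Gamma α := Real.Gamma_pos_of_pos (by linarith)
  calc |psiInt ψ a α g t₁ - psiInt ψ a α g t₂|
      = 1 / Real.Gamma α * |(∫ τ in a..t₁, psiKernel ψ α t₁ τ * g τ)
          - ∫ τ in a..t₂, psiKernel ψ α t₂ τ * g τ| := by
        rw [psiInt, psiInt, ← mul_sub, abs_mul, abs_of_pos (one_div_pos.mpr hΓ)]
        rfl
    _ ≤ 1 / Real.Gamma α * (M * ((ψ t₁ - ψ a) ^ α / α - (ψ t₂ - ψ a) ^ α / α)) := by gcongr
    _ = M / Real.Gamma (α + 1) * ((ψ t₁ - ψ a) ^ α - (ψ t₂ - ψ a) ^ α) := by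
        rw [Real.Gamma_add_one (by linarith)]
        field_simp

lemma abs_le_sSup_abs_image {f : ℝ → ℝ → ℝ} {a b R t y : ℝ}
    (hf : ContinuousOn (fun p : ℝ × ℝ => f p.1 p.2) (Icc a b ×ˢ Icc (-R) R))
    (ht : t ∈ Icc a b) (hy : |y| ≤ R) :
    |f t y| ≤ sSup ((fun p : ℝ × ℝ => |f p.1 p.2|) '' (Icc a b ×ˢ Icc (-R) R)) :=
  le_csSup ((isCompact_Icc.prod isCompact_Icc).image_of_continuousOn hf.abs).bddAbove
    ⟨(t, y), ⟨ht, abs_le.mp hy⟩, rfl⟩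

lemma Fop_sub_Fop (ψ : ℝ → ℝ) (a b v α K xa xa1 N : ℝ) (f : ℝ → ℝ → ℝ) (x : ℝ → ℝ)
    (t₁ t₂ : ℝ) :
    Fop ψ a b v α K xa xa1 N f x t₁ - Fop ψ a b v α K xa xa1 N f x t₂ =
      (psiInt ψ a α (fun s => f s (x s)) t₁ - psiInt ψ a α (fun s => f s (x s)) t₂)
        + xa1 / deriv ψ a * (ψ t₁ - ψ t₂)
        + gammaX ψ a b v α K xa xa1 N f x * ((ψ t₁ - ψ a) ^ 2 - (ψ t₂ - ψ a) ^ 2) := by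
  simp only [Fop]
  ring

theorem Fop_equicontinuous_general (a b v α K xa xa1 R M : ℝ) (ψ : ℝ → ℝ)
    (f : ℝ → ℝ → ℝ)
    (hψmono : StrictMonoOn ψ (Icc a b)) (hψdiff : ContDiffOn ℝ 1 ψ (Icc a b))
    (hψ' : ∀ t ∈ Icc a b, 0 < deriv ψ t)
    (hα : α ∈ Set.Ioo (2 : ℝ) 3)
    (hf : ContinuousOn (fun p : ℝ × ℝ => f p.1 p.2) (Icc a b ×ˢ univ))
    (hM : M = sSup ((fun p : ℝ × ℝ => |f p.1 p.2|) '' (Icc a b ×ˢ Icc (-R) R))) :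
    ∀ x : ℝ → ℝ, ContinuousOn x (Icc a b) → (∀ t ∈ Icc a b, |x t| ≤ R) →
      ∀ t₁ t₂ : ℝ, a ≤ t₂ → t₂ < t₁ → t₁ ≤ b →
        |Fop ψ a b v α K xa xa1
            (2 * K / Real.Gamma (3 + α) * (ψ v - ψ a) ^ (2 + α) - (ψ b - ψ a) ^ 2) f x t₁
          - Fop ψ a b v α K xa xa1
            (2 * K / Real.Gamma (3 + α) * (ψ v - ψ a) ^ (2 + α) - (ψ b - ψ a) ^ 2) f x t₂|
          ≤ M / Real.Gamma (α + 1) * ((ψ t₁ - ψ a) ^ α - (ψ t₂ - ψ a) ^ α)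
            + |xa1| / deriv ψ a * (ψ t₁ - ψ t₂)
            + |gammaX ψ a b v α K xa xa1
                (2 * K / Real.Gamma (3 + α) * (ψ v - ψ a) ^ (2 + α) - (ψ b - ψ a) ^ 2) f x|
              * ((ψ t₁ - ψ a) ^ 2 - (ψ t₂ - ψ a) ^ 2) := by
  intro x hx hxR t₁ t₂ h₂ h₁ ht₁
  have hsub : Icc a t₁ ⊆ Icc a b := Icc_subset_Icc_right ht₁
  have ha : a ∈ Icc a b := ⟨le_rfl, h₂.trans (h₁.le.trans ht₁)⟩
  have ht₂ : t₂ ∈ Icc a b := hsub ⟨h₂, h₁.le⟩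
  have hψa₂ : ψ a ≤ ψ t₂ := hψmono.monotoneOn ha ht₂ h₂
  have hψ₂₁ : ψ t₂ ≤ ψ t₁ := (hψmono ht₂ (hsub ⟨h₂.trans h₁.le, le_rfl⟩) h₁).le
  have hg : ContinuousOn (fun s => f s (x s)) (Icc a b) :=
    hf.comp (continuousOn_id.prodMk hx) fun τ hτ => ⟨hτ, mem_univ _⟩
  have hgM : ∀ τ ∈ Icc a t₁, |f τ (x τ)| ≤ M := fun τ hτ => hM ▸
    abs_le_sSup_abs_image (hf.mono (prod_mono subset_rfl (subset_univ _))) (hsub hτ)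
      (hxR τ (hsub hτ))
  have hfrac := abs_psiInt_sub_psiInt_le (one_le_two.trans hα.1.le) h₂ h₁.le
    (hψdiff.continuousOn.mono hsub)
    ((hψdiff.differentiableOn one_ne_zero).mono (Ioo_subset_Icc_self.trans hsub))
    (fun τ hτ => (hψ' τ (hsub hτ)).le) (hg.mono hsub) hgM
  rw [Fop_sub_Fop]
  refine (abs_add_le _ _).trans (add_le_add (abs_add_le _ _) le_rfl) |>.trans
    (add_le_add_three hfrac (le_of_eq ?_) (le_of_eq ?_))
  · rw [abs_mul, abs_div, abs_of_pos (hψ' a ha), abs_of_nonneg (sub_nonneg.mpr hψ₂₁)]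
  · rw [abs_mul, abs_of_nonneg (sub_nonneg.mpr (by gcongr))]

/-- equicontinuity estimate for F(B_R). -/
theorem Fop_equicontinuous (a b v α K xa xa1 R M : ℝ) (ψ : ℝ → ℝ)
    (f : ℝ → ℝ → ℝ) (hab : a < b) (hv : v ∈ Ioc a b)
    (hψmono : StrictMonoOn ψ (Icc a b)) (hψdiff : ContDiffOn ℝ 1 ψ (Icc a b))
    (hψ' : ∀ t ∈ Icc a b, 0 < deriv ψ t)
    (hα : α ∈ Set.Ioo (2 : ℝ) 3)
    (hf : ContinuousOn (fun p : ℝ × ℝ => f p.1 p.2) (Icc a b ×ˢ univ))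
    (hN : 2 * K / Real.Gamma (3 + α) * (ψ v - ψ a) ^ (2 + α) - (ψ b - ψ a) ^ 2 ≠ 0)
    (hR : 0 < R)
    (hM : M = sSup ((fun p : ℝ × ℝ => |f p.1 p.2|) '' (Icc a b ×ˢ Icc (-R) R))) :
    ∀ x : ℝ → ℝ, ContinuousOn x (Icc a b) → (∀ t ∈ Icc a b, |x t| ≤ R) →
      ∀ t₁ t₂ : ℝ, a ≤ t₂ → t₂ < t₁ → t₁ ≤ b →
        |Fop ψ a b v α K xa xa1
            (2 * K / Real.Gamma (3 + α) * (ψ v - ψ a) ^ (2 + α) - (ψ b - ψ a) ^ 2) f x t₁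
          - Fop ψ a b v α K xa xa1
            (2 * K / Real.Gamma (3 + α) * (ψ v - ψ a) ^ (2 + α) - (ψ b - ψ a) ^ 2) f x t₂|
          ≤ M / Real.Gamma (α + 1) * ((ψ t₁ - ψ a) ^ α - (ψ t₂ - ψ a) ^ α)
            + |xa1| / deriv ψ a * (ψ t₁ - ψ t₂)
            + |gammaX ψ a b v α K xa xa1
                (2 * K / Real.Gamma (3 + α) * (ψ v - ψ a) ^ (2 + α) - (ψ b - ψ a) ^ 2) f x|
              * ((ψ t₁ - ψ a) ^ 2 - (ψ t₂ - ψ a) ^ 2) :=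
  Fop_equicontinuous_general a b v α K xa xa1 R M ψ f hψmono hψdiff hψ' hα hf hM
end
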